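/- arXiv:2202.13863 — 5 statements merged into one kernel-verified Lean document; each statement's English description precedes it below -/
import Mathlib

section
/- Let g : ℝⁿ → ℝ be differentiable, suppose its supremum g* = sup_z g(z) is finite and the set S = {z : g(z) = g*} of maximizers is nonempty, and suppose g satisfies the μ-PL condition: (1/2)‖∇g(z)‖² ≥ μ(g* − g(z)) for all z ∈ ℝⁿ, with μ > 0. Then g satisfies quadratic growth: for every z ∈ ℝⁿ, g* − g(z) ≥ (μ/2)·dist(z, S)², where dist(z, S) = inf_{z* ∈ S} ‖z − z*‖. -/
/-!
Put `f := √(g* − g)`, so that the maximizers of `g` are the zeros of `f`. Wherever `f > 0`,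
`‖Df‖ = ‖Dg‖ / (2f) ≥ √(μ/2)` by the PL inequality, so for `σ < √(μ/2)` every point `w` with
`f w > 0` can be improved to some `y` with `f y + σ·dist y w < f w`. Ekeland's variational
principle produces, from any `z`, a point `w` that cannot be improved and with
`f w + σ·dist w z ≤ f z`; hence `f w = 0` and `σ·dist(z, S) ≤ f z`. Letting `σ → √(μ/2)` and
squaring gives quadratic growth.
-/

open Filter Topology Metric Set

/-- The Brøndsted order of `f` with slope `σ`. -/
def BrondstedLE {X : Type*} [MetricSpace X] (f : X → ℝ) (σ : ℝ) (y x : X) : Prop :=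
  f y + σ * dist y x ≤ f x

section Ekeland

variable {X : Type*} [MetricSpace X] {f : X → ℝ} {σ : ℝ}

theorem brondstedLE_refl (x : X) : BrondstedLE f σ x x := by
  simp [BrondstedLE]

theorem BrondstedLE.trans (hσ : 0 ≤ σ) {x y z : X} (hxy : BrondstedLE f σ x y)
    (hyz : BrondstedLE f σ y z) : BrondstedLE f σ x z := by
  unfold BrondstedLE at *
  nlinarith [dist_triangle x y z]

theorem BrondstedLE.le (hσ : 0 ≤ σ) {x y : X} (h : BrondstedLE f σ y x) : f y ≤ f x := by
  unfold BrondstedLE at h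
  nlinarith [dist_nonneg (x := y) (y := x)]

theorem isClosed_setOf_brondstedLE (hf : LowerSemicontinuous f) (x : X) :
    IsClosed {y | BrondstedLE f σ y x} :=
  (hf.add (continuous_const.mul (continuous_id.dist continuous_const)).lowerSemicontinuous)
    |>.isClosed_preimage (f x)

theorem exists_brondstedLE_forall_le_add (hbdd : BddBelow (range f)) (x : X) {ε : ℝ}
    (hε : 0 < ε) :
    ∃ y, BrondstedLE f σ y x ∧ ∀ y', BrondstedLE f σ y' x → f y ≤ f y' + ε := by
  set S := f '' {y | BrondstedLE f σ y x}
  have hS : S.Nonempty := ⟨f x, x, brondstedLE_refl x, rfl⟩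
  have hSbdd : BddBelow S := hbdd.mono (image_subset_range _ _)
  obtain ⟨_, ⟨y, hy, rfl⟩, hlt⟩ := exists_lt_of_csInf_lt hS (lt_add_of_pos_right (sInf S) hε)
  exact ⟨y, hy, fun y' hy' => by linarith [csInf_le hSbdd (mem_image_of_mem f hy')]⟩

theorem exists_seq_brondstedLE (hbdd : BddBelow (range f)) (z : X) :
    ∃ x : ℕ → X, x 0 = z ∧ ∀ k, BrondstedLE f σ (x (k + 1)) (x k) ∧
      ∀ y, BrondstedLE f σ y (x k) → f (x (k + 1)) ≤ f y + (1 / 2) ^ k := by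
  choose next hnext using fun (x : X) (k : ℕ) =>
    exists_brondstedLE_forall_le_add (σ := σ) hbdd x (pow_pos (one_half_pos (α := ℝ)) k)
  exact ⟨fun k => Nat.rec z (fun k xk => next xk k) k, rfl, fun k => hnext _ k⟩

/-- Ekeland's variational principle. -/
theorem exists_brondstedLE_forall_le [CompleteSpace X] (hf : LowerSemicontinuous f)
    (hbdd : BddBelow (range f)) (hσ : 0 < σ) (z : X) :
    ∃ w, BrondstedLE f σ w z ∧ ∀ y, BrondstedLE f σ y w → f w ≤ f y := by
  obtain ⟨x, rfl, hx⟩ := exists_seq_brondstedLE (σ := σ) hbdd z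
  have chain : ∀ k m, k ≤ m → BrondstedLE f σ (x m) (x k) := by
    intro k m hkm
    induction m, hkm using Nat.le_induction with
    | base => exact brondstedLE_refl _
    | succ m _ ih => exact (hx m).1.trans hσ.le ih
  have tail : ∀ k m, k + 1 ≤ m → σ * dist (x m) (x (k + 1)) ≤ (1 / 2) ^ k := fun k m hkm => by
    have := (hx k).2 (x m) (chain k m (by omega))
    unfold BrondstedLE at *
    linarith [chain (k + 1) m hkm]
  have hcauchy : CauchySeq x := by
    refine Metric.cauchySeq_iff'.2 fun ε hε => ?_
    obtain ⟨k, hk⟩ := exists_pow_lt_of_lt_one (mul_pos hσ hε) (one_half_lt_one (α := ℝ))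
    exact ⟨k + 1, fun m hm => lt_of_mul_lt_mul_left ((tail k m hm).trans_lt hk) hσ.le⟩
  obtain ⟨w, hw⟩ := cauchySeq_tendsto_of_complete hcauchy
  have hw_le : ∀ k, BrondstedLE f σ w (x k) := fun k =>
    (isClosed_setOf_brondstedLE hf (x k)).mem_of_tendsto hw (eventually_atTop.2 ⟨k, chain k⟩)
  refine ⟨w, hw_le 0, fun y hy => ?_⟩
  have hclose : ∀ k, f w ≤ f y + (1 / 2) ^ k := fun k =>
    ((hw_le (k + 1)).le hσ.le).trans ((hx k).2 y (hy.trans hσ.le (hw_le k)))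
  have hlim : Tendsto (fun k : ℕ => f y + (1 / 2 : ℝ) ^ k) atTop (𝓝 (f y + 0)) :=
    tendsto_const_nhds.add (tendsto_pow_atTop_nhds_zero_of_lt_one (by norm_num) (by norm_num))
  simpa using ge_of_tendsto' hlim hclose

end Ekeland

theorem mul_infDist_le_of_forall_exists_add_mul_dist_lt {X : Type*} [MetricSpace X]
    [CompleteSpace X] {f : X → ℝ} {σ : ℝ} (hf : LowerSemicontinuous f) (hf0 : ∀ x, 0 ≤ f x)
    (hσ : 0 < σ) (hdescent : ∀ w, 0 < f w → ∃ y, f y + σ * dist y w < f w) (z : X) :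
    σ * infDist z {w | f w = 0} ≤ f z := by
  obtain ⟨w, hwz, hmin⟩ := exists_brondstedLE_forall_le hf ⟨0, forall_mem_range.2 hf0⟩ hσ z
  have hw0 : f w = 0 := by
    by_contra hne
    obtain ⟨y, hy⟩ := hdescent w ((hf0 w).lt_of_ne' hne)
    have := hmin y hy.le
    nlinarith [dist_nonneg (x := y) (y := w)]
  calc σ * infDist z {w | f w = 0} ≤ σ * dist w z := by
        rw [dist_comm]; exact mul_le_mul_of_nonneg_left (infDist_le_dist_of_mem hw0) hσ.le
    _ ≤ f z := by unfold BrondstedLE at hwz; linarith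

theorem HasFDerivAt.exists_add_mul_dist_lt {E : Type*} [NormedAddCommGroup E] [NormedSpace ℝ E]
    {φ : E → ℝ} {φ' : E →L[ℝ] ℝ} {w : E} {σ : ℝ} (hφ : HasFDerivAt φ φ' w) (hσ : 0 ≤ σ)
    (hlt : σ < ‖φ'‖) : ∃ y, φ y + σ * dist y w < φ w := by
  obtain ⟨u, hu1, hu⟩ : ∃ u, ‖u‖ < 1 ∧ σ < φ' u := by
    obtain ⟨v, hv1, hv⟩ := φ'.exists_lt_apply_of_lt_opNorm hlt
    rcases le_or_gt 0 (φ' v) with hpos | hneg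
    · exact ⟨v, hv1, by rwa [Real.norm_of_nonneg hpos] at hv⟩
    · exact ⟨-v, by rwa [norm_neg], by rwa [Real.norm_eq_abs, _root_.abs_of_neg hneg, ← map_neg] at hv⟩
  have hslope : ∀ᶠ t in 𝓝[>] (0 : ℝ), t⁻¹ • (φ (w + t • -u) - φ w) < -σ :=
    (hφ.hasLineDerivAt (-u)).tendsto_slope_zero_right.eventually
      (gt_mem_nhds (by rw [map_neg]; linarith))
  obtain ⟨t, ht, htpos⟩ := (hslope.and self_mem_nhdsWithin).exists
  rw [smul_eq_mul, inv_mul_lt_iff₀ htpos] at ht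
  have hdist : dist (w + t • -u) w ≤ t := by
    rw [dist_eq_norm, add_sub_cancel_left, norm_smul, norm_neg, Real.norm_of_nonneg htpos.le]
    exact mul_le_of_le_one_right htpos.le hu1.le
  exact ⟨w + t • -u, by nlinarith [mul_le_mul_of_nonneg_left hdist hσ]⟩

section PL

variable {E : Type*} [NormedAddCommGroup E] [NormedSpace ℝ E] {g : E → ℝ} {gStar μ : ℝ}

theorem exists_sqrt_sub_add_mul_dist_lt {w : E} {σ : ℝ} (hg : DifferentiableAt ℝ g w)
    (hPL : μ * (gStar - g w) ≤ 1 / 2 * ‖fderiv ℝ g w‖ ^ 2) (hσ : 0 ≤ σ) (hσμ : σ < √(μ / 2))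
    (hw : 0 < √(gStar - g w)) :
    ∃ y, √(gStar - g y) + σ * dist y w < √(gStar - g w) := by
  set s := √(gStar - g w)
  have hs : s ^ 2 = gStar - g w := Real.sq_sqrt (Real.sqrt_pos.1 hw).le
  have hσ2 : σ ^ 2 < μ / 2 := (Real.lt_sqrt hσ).1 hσμ
  have hderiv := (hg.hasFDerivAt.const_sub gStar).sqrt (Real.sqrt_pos.1 hw).ne'
  refine hderiv.exists_add_mul_dist_lt hσ ?_
  rw [norm_smul, norm_neg, Real.norm_of_nonneg (by positivity), one_div, ← div_eq_inv_mul,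
    lt_div_iff₀ (by positivity)]
  have : (σ * (2 * s)) ^ 2 < ‖fderiv ℝ g w‖ ^ 2 := by
    nlinarith [mul_lt_mul_of_pos_right hσ2 (pow_pos hw 2)]
  exact lt_of_pow_lt_pow_left₀ 2 (norm_nonneg _) this

theorem mul_sq_infDist_le_of_polyakLojasiewicz [CompleteSpace E] (hμ : 0 < μ)
    (hg : Differentiable ℝ g) (hle : ∀ z, g z ≤ gStar)
    (hPL : ∀ z, μ * (gStar - g z) ≤ 1 / 2 * ‖fderiv ℝ g z‖ ^ 2) (z : E) :
    μ / 2 * infDist z {z' | g z' = gStar} ^ 2 ≤ gStar - g z := by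
  set d := infDist z {z' | g z' = gStar}
  have hzeros : {z' | g z' = gStar} = {y | √(gStar - g y) = 0} := by
    ext y
    show g y = gStar ↔ √(gStar - g y) = 0
    rw [Real.sqrt_eq_zero (sub_nonneg.2 (hle y)), sub_eq_zero, eq_comm]
  have key : ∀ σ ∈ Ioo 0 √(μ / 2), σ * d ≤ √(gStar - g z) := fun σ hσ => by
    rw [show d = _ from congrArg (infDist z) hzeros]
    exact mul_infDist_le_of_forall_exists_add_mul_dist_lt
      (continuous_const.sub hg.continuous).sqrt.lowerSemicontinuous
      (fun _ => Real.sqrt_nonneg _) hσ.1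
      (fun w hw => exists_sqrt_sub_add_mul_dist_lt (hg w) (hPL w) hσ.1.le hσ.2 hw) z
  have hlim : √(μ / 2) * d ≤ √(gStar - g z) :=
    le_of_tendsto (((continuous_mul_const d).tendsto _).mono_left nhdsWithin_le_nhds)
      (mem_of_superset (Ioo_mem_nhdsLT (by positivity)) key)
  calc μ / 2 * d ^ 2 = (√(μ / 2) * d) ^ 2 := by rw [mul_pow, Real.sq_sqrt (by positivity)]
    _ ≤ √(gStar - g z) ^ 2 := pow_le_pow_left₀ (mul_nonneg (Real.sqrt_nonneg _) infDist_nonneg) hlim 2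
    _ = gStar - g z := Real.sq_sqrt (sub_nonneg.2 (hle z))

end PL

theorem stmt2_general {n : ℕ} (μ : ℝ) (hμ : 0 < μ)
    (g : EuclideanSpace ℝ (Fin n) → ℝ) (gStar : ℝ)
    (hdiff : Differentiable ℝ g)
    (hsup : IsLUB (Set.range g) gStar)
    (hPL : ∀ z, μ * (gStar - g z) ≤ (1 / 2) * ‖gradient g z‖ ^ 2) :
    ∀ z, (μ / 2) * (Metric.infDist z {z' : EuclideanSpace ℝ (Fin n) | g z' = gStar}) ^ 2
      ≤ gStar - g z := by
  have hnorm : ∀ z, ‖gradient g z‖ = ‖fderiv ℝ g z‖ := fun z =>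
    (InnerProductSpace.toDual ℝ _).symm.norm_map _
  exact mul_sq_infDist_le_of_polyakLojasiewicz hμ hdiff (fun z => hsup.1 (mem_range_self z))
    (fun z => hnorm z ▸ hPL z)

/-- PL implies quadratic growth: if `g` is differentiable, its supremum
`g*` is finite, the set of maximizers `S = {z : g z = g*}` is nonempty, and `g` satisfies
the `μ`-PL condition `(1/2)‖∇g(z)‖² ≥ μ(g* − g(z))`, then for every `z`,
`g* − g(z) ≥ (μ/2)·dist(z, S)²`. -/
theorem stmt2 {n : ℕ} (μ : ℝ) (hμ : 0 < μ)
    (g : EuclideanSpace ℝ (Fin n) → ℝ) (gStar : ℝ)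
    (hdiff : Differentiable ℝ g)
    (hsup : IsLUB (Set.range g) gStar)
    (hS : {z : EuclideanSpace ℝ (Fin n) | g z = gStar}.Nonempty)
    (hPL : ∀ z, μ * (gStar - g z) ≤ (1 / 2) * ‖gradient g z‖ ^ 2) :
    ∀ z, (μ / 2) * (Metric.infDist z {z' : EuclideanSpace ℝ (Fin n) | g z' = gStar}) ^ 2
      ≤ gStar - g z :=
  stmt2_general μ hμ g gStar hdiff hsup hPL
end

section
/- For any N ∈ ℕ and any nonnegative real numbers a₁, …, a_N, one has ∑_{k=1}^{N} a_k / (1/2 + ∑_{t=1}^{k} a_t) ≤ ln(1 + 2·∑_{k=1}^{N} a_k). -/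
/-! Each term `a_k / S_k`, with `S_k = 1/2 + a_1 + ⋯ + a_k`, is at most `log S_k - log S_{k-1}`
by `1 - 1/x ≤ log x` at `x = S_k / S_{k-1}`; the sum telescopes to
`log S_N - log (1/2) = log (1 + 2 ∑ a_k)`. -/

open Finset Real

lemma sub_div_le_log_sub_log {b s : ℝ} (hb : 0 < b) (hbs : b ≤ s) :
    (s - b) / s ≤ log s - log b := by
  have hs : 0 < s := hb.trans_le hbs
  calc (s - b) / s = 1 - (s / b)⁻¹ := by field_simp
    _ ≤ log (s / b) := one_sub_inv_le_log_of_pos (div_pos hs hb)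
    _ = log s - log b := log_div hs.ne' hb.ne'

lemma sum_div_partial_sum_le_log_sub_log {c : ℝ} (hc : 0 < c) (N : ℕ) (a : ℕ → ℝ)
    (ha : ∀ k < N, 0 ≤ a k) :
    ∑ k ∈ range N, a k / (c + ∑ t ∈ range (k + 1), a t)
      ≤ log (c + ∑ k ∈ range N, a k) - log c := by
  set S : ℕ → ℝ := fun k ↦ c + ∑ t ∈ range k, a t with hS
  calc ∑ k ∈ range N, a k / S (k + 1)
      ≤ ∑ k ∈ range N, (log (S (k + 1)) - log (S k)) := by
        refine sum_le_sum fun k hk ↦ ?_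
        have hk : k < N := mem_range.mp hk
        have hSk : 0 < S k := add_pos_of_pos_of_nonneg hc <|
          sum_nonneg fun t ht ↦ ha t ((mem_range.mp ht).trans hk)
        have hstep : S (k + 1) = S k + a k := by simp only [hS, sum_range_succ, add_assoc]
        have h := sub_div_le_log_sub_log hSk (le_add_of_nonneg_right (ha k hk))
        rwa [add_sub_cancel_left, ← hstep] at h
    _ = log (S N) - log c := by
        rw [sum_range_sub (fun k ↦ log (S k))]
        simp only [hS, range_zero, sum_empty, add_zero]

/-- concavity-of-log summation bound, cf. Lemma 4 of Cutkosky–Orabona: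
for nonnegative reals `a₁, …, a_N`,
`∑_{k=1}^{N} a_k / (1/2 + ∑_{t=1}^{k} a_t) ≤ ln(1 + 2 ∑_{k=1}^{N} a_k)`.
Here the sequence is indexed from `0`, so `Finset.range N` plays the role of `{1,…,N}`
and `Finset.range (k+1)` the role of `{1,…,k}`. -/
theorem stmt3 (N : ℕ) (a : ℕ → ℝ) (ha : ∀ k < N, 0 ≤ a k) :
    ∑ k ∈ Finset.range N, a k / (1 / 2 + ∑ t ∈ Finset.range (k + 1), a t)
      ≤ Real.log (1 + 2 * ∑ k ∈ Finset.range N, a k) := by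
  have hsum : 0 ≤ ∑ k ∈ range N, a k := sum_nonneg fun k hk ↦ ha k (mem_range.mp hk)
  calc _ ≤ log (1 / 2 + ∑ k ∈ range N, a k) - log (1 / 2) :=
        sum_div_partial_sum_le_log_sub_log one_half_pos N a ha
    _ = log (1 + 2 * ∑ k ∈ range N, a k) := by
        rw [← log_div (by positivity) (by norm_num)]
        congr 1
        ring
end

section
/- Let g₁, …, g_N ∈ ℝ^d be arbitrary vectors and Ĝ > 0. For each k ∈ {1,…,N} and coordinate i ∈ {1,…,d} define h_{k,i} = (1/(2Ĝ²))·∑_{t=1}^{k} g_{t,i}². Then ∑_{k=1}^{N} ∑_{i=1}^{d} g_{k,i}² / (h_{k,i} + 1/2) ≤ 2Ĝ² · ∑_{i=1}^{d} ln(1 + (1/Ĝ²)·∑_{k=1}^{N} g_{k,i}²). -/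
/-!
Coordinatewise, with `S_k = ∑_{t ≤ k} g_{t,i}²`, the `k`-th summand equals
`2Ĝ² · g_{k,i}² / (Ĝ² + S_k)`, and `a / (c + a) ≤ log (c + a) - log c` (which is `1 - 1/x ≤ log x`)
bounds it by `2Ĝ² (log (Ĝ² + S_k) - log (Ĝ² + S_{k-1}))`. The sum over `k` telescopes to
`2Ĝ² log (1 + S_N / Ĝ²)`.
-/

open Finset

lemma div_add_le_log_add_sub_log {c a : ℝ} (hc : 0 < c) (ha : 0 ≤ a) :
    a / (c + a) ≤ Real.log (c + a) - Real.log c := by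
  have hca : 0 < c + a := by linarith
  calc a / (c + a) = 1 - ((c + a) / c)⁻¹ := by field_simp; ring
    _ ≤ Real.log ((c + a) / c) := Real.one_sub_inv_le_log_of_pos (by positivity)
    _ = Real.log (c + a) - Real.log c := Real.log_div hca.ne' hc.ne'

lemma sum_div_add_partial_sum_le_log {c : ℝ} (hc : 0 < c) (a : ℕ → ℝ) (ha : ∀ k, 0 ≤ a k)
    (N : ℕ) :
    ∑ k ∈ range N, a k / (c + ∑ t ∈ range (k + 1), a t)
      ≤ Real.log (c + ∑ t ∈ range N, a t) - Real.log c := by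
  have hpos : ∀ k, 0 < c + ∑ t ∈ range k, a t := fun k =>
    add_pos_of_pos_of_nonneg hc (sum_nonneg fun t _ => ha t)
  calc ∑ k ∈ range N, a k / (c + ∑ t ∈ range (k + 1), a t)
      ≤ ∑ k ∈ range N, (Real.log (c + ∑ t ∈ range (k + 1), a t)
          - Real.log (c + ∑ t ∈ range k, a t)) := by
        gcongr with k
        rw [sum_range_succ, ← add_assoc]
        exact div_add_le_log_add_sub_log (hpos k) (ha k)
    _ = Real.log (c + ∑ t ∈ range N, a t) - Real.log c := by
        rw [sum_range_sub (fun k => Real.log (c + ∑ t ∈ range k, a t)), sum_range_zero, add_zero]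

/-- cumulative adaptive gradient bound: for vectors `g₁,…,g_N ∈ ℝ^d`
and `Ĝ > 0`, with `h_{k,i} = (1/(2Ĝ²)) ∑_{t=1}^{k} g_{t,i}²`,
`∑_{k=1}^{N} ∑_{i=1}^{d} g_{k,i}² / (h_{k,i} + 1/2)
  ≤ 2Ĝ² ∑_{i=1}^{d} ln(1 + (1/Ĝ²) ∑_{k=1}^{N} g_{k,i}²)`.
Here vectors and coordinates are indexed from `0` via `Finset.range`. -/
theorem stmt4 (N d : ℕ) (g : ℕ → ℕ → ℝ) (Ghat : ℝ) (hG : 0 < Ghat) :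
    ∑ k ∈ Finset.range N, ∑ i ∈ Finset.range d,
      (g k i) ^ 2 / ((1 / (2 * Ghat ^ 2)) * (∑ t ∈ Finset.range (k + 1), (g t i) ^ 2) + 1 / 2)
    ≤ 2 * Ghat ^ 2 * ∑ i ∈ Finset.range d,
        Real.log (1 + (1 / Ghat ^ 2) * ∑ k ∈ Finset.range N, (g k i) ^ 2) := by
  have hG2 : 0 < Ghat ^ 2 := by positivity
  rw [sum_comm, mul_sum]
  refine sum_le_sum fun i _ => ?_
  have hS : ∀ n, 0 ≤ ∑ t ∈ range n, g t i ^ 2 := fun n => sum_nonneg fun t _ => sq_nonneg _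
  have hsummand : ∀ k, g k i ^ 2 / (1 / (2 * Ghat ^ 2) * ∑ t ∈ range (k + 1), g t i ^ 2 + 1 / 2)
      = 2 * Ghat ^ 2 * (g k i ^ 2 / (Ghat ^ 2 + ∑ t ∈ range (k + 1), g t i ^ 2)) := fun k => by
    have := hS (k + 1)
    field_simp
    ring
  have hlog : Real.log (1 + 1 / Ghat ^ 2 * ∑ k ∈ range N, g k i ^ 2)
      = Real.log (Ghat ^ 2 + ∑ t ∈ range N, g t i ^ 2) - Real.log (Ghat ^ 2) := by
    have := hS N
    rw [← Real.log_div (by positivity) hG2.ne']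
    congr 1
    field_simp
  rw [sum_congr rfl fun k _ => hsummand k, ← mul_sum, hlog]
  gcongr
  exact sum_div_add_partial_sum_le_log hG2 (fun k => g k i ^ 2) (fun k => sq_nonneg _) N
end

section
/- Let L : ℝ^{d₁} × ℝ^{d₂} → ℝ be differentiable with C-Lipschitz gradient. Suppose for each ω the supremum Φ(ω) = sup_z L(ω,z) is attained at some f*(ω), that ∇Φ(ω) = ∇_ω L(ω, f*(ω)), and that the quadratic-growth bound ‖f*(ω) − z‖² ≤ (2/μ)(Φ(ω) − L(ω,z)) holds for all ω, z (μ > 0). Then for any ω, ω̂ ∈ ℝ^{d₁}, ẑ ∈ ℝ^{d₂} and any vector g ∈ ℝ^{d₁}: ‖∇Φ(ω) − g‖² ≤ (6C²/μ)(Φ(ω) − L(ω, ẑ)) + 3C²‖ω − ω̂‖² + 3‖g − ∇_ω L(ω̂, ẑ)‖². -/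
/-- Partial gradient of `L` with respect to the first block of variables. -/
noncomputable def gradFst {d₁ d₂ : ℕ}
    (L : EuclideanSpace ℝ (Fin d₁) → EuclideanSpace ℝ (Fin d₂) → ℝ)
    (ω : EuclideanSpace ℝ (Fin d₁)) (z : EuclideanSpace ℝ (Fin d₂)) :
    EuclideanSpace ℝ (Fin d₁) :=
  gradient (fun w => L w z) ω

/-- Partial gradient of `L` with respect to the second block of variables. -/
noncomputable def gradSnd {d₁ d₂ : ℕ}
    (L : EuclideanSpace ℝ (Fin d₁) → EuclideanSpace ℝ (Fin d₂) → ℝ)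
    (ω : EuclideanSpace ℝ (Fin d₁)) (z : EuclideanSpace ℝ (Fin d₂)) :
    EuclideanSpace ℝ (Fin d₂) :=
  gradient (fun y => L ω y) z

/-!
Split `∇Φ(ω) − g = ∇_ω L(ω, f*(ω)) − g` at the intermediate points `∇_ω L(ω, ẑ)` and
`∇_ω L(ω̂, ẑ)`, bound the square of a sum of three vectors by three times the sum of squares,
and control the first two pieces by the Lipschitz bound: the first by `C²‖f*(ω) − ẑ‖²`, which
quadratic growth turns into `(2C²/μ)(Φ(ω) − L(ω, ẑ))`, the second by `C²‖ω − ω̂‖²`.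
-/

theorem sq_le_of_sqrt_sq_add_sq_le_mul_sqrt {a b C s : ℝ} (hs : 0 ≤ s)
    (h : Real.sqrt (a ^ 2 + b ^ 2) ≤ C * Real.sqrt s) : a ^ 2 ≤ C ^ 2 * s := by
  have hsq : Real.sqrt (a ^ 2 + b ^ 2) ^ 2 ≤ (C * Real.sqrt s) ^ 2 :=
    pow_le_pow_left₀ (Real.sqrt_nonneg _) h 2
  rw [Real.sq_sqrt (by positivity), mul_pow, Real.sq_sqrt hs] at hsq
  nlinarith [sq_nonneg b]

theorem norm_add_add_sq_le {E : Type*} [SeminormedAddCommGroup E] (x y z : E) :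
    ‖x + y + z‖ ^ 2 ≤ 3 * (‖x‖ ^ 2 + ‖y‖ ^ 2 + ‖z‖ ^ 2) := by
  have htri : ‖x + y + z‖ ≤ ‖x‖ + ‖y‖ + ‖z‖ := norm_add₃_le
  nlinarith [norm_nonneg (x + y + z), sq_nonneg (‖x‖ - ‖y‖), sq_nonneg (‖x‖ - ‖z‖),
    sq_nonneg (‖y‖ - ‖z‖)]

theorem norm_gradFst_sub_sq_le {d₁ d₂ : ℕ} {C : ℝ}
    {L : EuclideanSpace ℝ (Fin d₁) → EuclideanSpace ℝ (Fin d₂) → ℝ}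
    (hLip : ∀ (ω : EuclideanSpace ℝ (Fin d₁)) (z : EuclideanSpace ℝ (Fin d₂))
        (ω' : EuclideanSpace ℝ (Fin d₁)) (z' : EuclideanSpace ℝ (Fin d₂)),
      Real.sqrt (‖gradFst L ω z - gradFst L ω' z'‖ ^ 2 + ‖gradSnd L ω z - gradSnd L ω' z'‖ ^ 2)
        ≤ C * Real.sqrt (‖ω - ω'‖ ^ 2 + ‖z - z'‖ ^ 2))
    (ω ω' : EuclideanSpace ℝ (Fin d₁)) (z z' : EuclideanSpace ℝ (Fin d₂)) :
    ‖gradFst L ω z - gradFst L ω' z'‖ ^ 2 ≤ C ^ 2 * (‖ω - ω'‖ ^ 2 + ‖z - z'‖ ^ 2) :=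
  sq_le_of_sqrt_sq_add_sq_le_mul_sqrt (by positivity) (hLip ω z ω' z')

theorem stmt6_general {d₁ d₂ : ℕ} (C μ : ℝ)
    (L : EuclideanSpace ℝ (Fin d₁) → EuclideanSpace ℝ (Fin d₂) → ℝ)
    (Φ : EuclideanSpace ℝ (Fin d₁) → ℝ)
    (fstar : EuclideanSpace ℝ (Fin d₁) → EuclideanSpace ℝ (Fin d₂))
    (hLip : ∀ (ω : EuclideanSpace ℝ (Fin d₁)) (z : EuclideanSpace ℝ (Fin d₂))
        (ω' : EuclideanSpace ℝ (Fin d₁)) (z' : EuclideanSpace ℝ (Fin d₂)),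
      Real.sqrt (‖gradFst L ω z - gradFst L ω' z'‖ ^ 2 + ‖gradSnd L ω z - gradSnd L ω' z'‖ ^ 2)
        ≤ C * Real.sqrt (‖ω - ω'‖ ^ 2 + ‖z - z'‖ ^ 2))
    (hgradΦ : ∀ ω, gradient Φ ω = gradFst L ω (fstar ω))
    (hQG : ∀ ω z, ‖fstar ω - z‖ ^ 2 ≤ (2 / μ) * (Φ ω - L ω z)) :
    ∀ (ω ωhat : EuclideanSpace ℝ (Fin d₁)) (zhat : EuclideanSpace ℝ (Fin d₂))
      (g : EuclideanSpace ℝ (Fin d₁)),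
      ‖gradient Φ ω - g‖ ^ 2
        ≤ (6 * C ^ 2 / μ) * (Φ ω - L ω zhat) + 3 * C ^ 2 * ‖ω - ωhat‖ ^ 2
          + 3 * ‖g - gradFst L ωhat zhat‖ ^ 2 := by
  intro ω ωhat zhat g
  have hsplit : gradient Φ ω - g = (gradFst L ω (fstar ω) - gradFst L ω zhat)
      + (gradFst L ω zhat - gradFst L ωhat zhat) + (gradFst L ωhat zhat - g) := by
    rw [hgradΦ ω]; abel
  have hfst : ‖gradFst L ω (fstar ω) - gradFst L ω zhat‖ ^ 2
      ≤ C ^ 2 * ((2 / μ) * (Φ ω - L ω zhat)) := by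
    have h := norm_gradFst_sub_sq_le hLip ω ω (fstar ω) zhat
    rw [sub_self, norm_zero, zero_pow two_ne_zero, zero_add] at h
    exact h.trans (mul_le_mul_of_nonneg_left (hQG ω zhat) (sq_nonneg C))
  have hsnd : ‖gradFst L ω zhat - gradFst L ωhat zhat‖ ^ 2 ≤ C ^ 2 * ‖ω - ωhat‖ ^ 2 := by
    simpa using norm_gradFst_sub_sq_le hLip ω ωhat zhat zhat
  calc ‖gradient Φ ω - g‖ ^ 2
      ≤ 3 * (‖gradFst L ω (fstar ω) - gradFst L ω zhat‖ ^ 2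
          + ‖gradFst L ω zhat - gradFst L ωhat zhat‖ ^ 2
          + ‖g - gradFst L ωhat zhat‖ ^ 2) := by
        rw [hsplit, norm_sub_rev g]; exact norm_add_add_sq_le _ _ _
    _ ≤ 3 * (C ^ 2 * ((2 / μ) * (Φ ω - L ω zhat)) + C ^ 2 * ‖ω - ωhat‖ ^ 2
          + ‖g - gradFst L ωhat zhat‖ ^ 2) := by gcongr
    _ = _ := by ring

/-- gradient error decomposition: if `L` has a `C`-Lipschitz full
gradient, the envelope `Φ(ω) = sup_z L(ω,z)` is attained at `f*(ω)` with
`∇Φ(ω) = ∇_ω L(ω, f*(ω))`, and the quadratic-growth bound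
`‖f*(ω) − z‖² ≤ (2/μ)(Φ(ω) − L(ω,z))` holds, then for any `ω, ω̂, ẑ, g`:
`‖∇Φ(ω) − g‖² ≤ (6C²/μ)(Φ(ω) − L(ω, ẑ)) + 3C²‖ω − ω̂‖² + 3‖g − ∇_ω L(ω̂, ẑ)‖²`. -/
theorem stmt6 {d₁ d₂ : ℕ} (C μ : ℝ) (hμ : 0 < μ)
    (L : EuclideanSpace ℝ (Fin d₁) → EuclideanSpace ℝ (Fin d₂) → ℝ)
    (Φ : EuclideanSpace ℝ (Fin d₁) → ℝ)
    (fstar : EuclideanSpace ℝ (Fin d₁) → EuclideanSpace ℝ (Fin d₂))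
    (hdiff : Differentiable ℝ
      (fun p : EuclideanSpace ℝ (Fin d₁) × EuclideanSpace ℝ (Fin d₂) => L p.1 p.2))
    (hLip : ∀ (ω : EuclideanSpace ℝ (Fin d₁)) (z : EuclideanSpace ℝ (Fin d₂))
        (ω' : EuclideanSpace ℝ (Fin d₁)) (z' : EuclideanSpace ℝ (Fin d₂)),
      Real.sqrt (‖gradFst L ω z - gradFst L ω' z'‖ ^ 2 + ‖gradSnd L ω z - gradSnd L ω' z'‖ ^ 2)
        ≤ C * Real.sqrt (‖ω - ω'‖ ^ 2 + ‖z - z'‖ ^ 2))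
    (hattain : ∀ ω z, L ω z ≤ L ω (fstar ω))
    (hΦ : ∀ ω, Φ ω = L ω (fstar ω))
    (hgradΦ : ∀ ω, gradient Φ ω = gradFst L ω (fstar ω))
    (hQG : ∀ ω z, ‖fstar ω - z‖ ^ 2 ≤ (2 / μ) * (Φ ω - L ω z)) :
    ∀ (ω ωhat : EuclideanSpace ℝ (Fin d₁)) (zhat : EuclideanSpace ℝ (Fin d₂))
      (g : EuclideanSpace ℝ (Fin d₁)),
      ‖gradient Φ ω - g‖ ^ 2
        ≤ (6 * C ^ 2 / μ) * (Φ ω - L ω zhat) + 3 * C ^ 2 * ‖ω - ωhat‖ ^ 2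
          + 3 * ‖g - gradFst L ωhat zhat‖ ^ 2 :=
  stmt6_general C μ L Φ fstar hLip hgradΦ hQG
end

section
/- Let L : ℝ^{d₁} × ℝ^{d₂} → ℝ be differentiable with C-Lipschitz gradient; suppose for each ω the supremum Φ(ω) = sup_z L(ω,z) is attained at f*(ω), that ∇Φ(ω) = ∇_ω L(ω, f*(ω)), that the quadratic-growth bound ‖f*(ω) − z‖² ≤ (2/μ)(Φ(ω) − L(ω,z)) holds for all ω, z (μ > 0), and that Φ has β-Lipschitz gradient. Let 0 < η ≤ 1/β, let z̃ ∈ ℝ^{d₂}, let g_i, m_i ∈ ℝ^{d₁} for i = 1, …, A be arbitrary, and let ω̄' = ω̄ − (η/A)∑_{i=1}^{A}(g_i + m_i). Then Φ(ω̄') − Φ(ω̄) ≤ (3ηC²/μ)(Φ(ω̄) − L(ω̄, z̃)) + (3η/(2A))∑_{i=1}^{A} ‖∇_ω L(ω̄, z̃) − g_i‖² + (3η/(2A))∑_{i=1}^{A} ‖m_i‖² − (η/2)‖∇Φ(ω̄)‖². -/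
/-!
Along a direction `v`, a step of length `η ≤ 1/β` decreases the `β`-smooth envelope `Φ` by at
least `(η/2)‖∇Φ‖²`, up to an error `(η/2)‖v - ∇Φ‖²`. Here `v` is the average of the agents'
directions `gᵢ + mᵢ`, so by Jensen the error is at most the average of `‖gᵢ + mᵢ - ∇Φ(ω̄)‖²`.
Each of these splits into three pieces, using `‖a + b + c‖² ≤ 3(‖a‖² + ‖b‖² + ‖c‖²)`:
`∇Φ(ω̄) - ∇_ω L(ω̄, z̃)`, `∇_ω L(ω̄, z̃) - gᵢ` and `mᵢ`. Since `∇Φ(ω̄) = ∇_ω L(ω̄, f*(ω̄))`, the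
first piece is at most `C ‖f*(ω̄) - z̃‖`, and quadratic growth bounds that by the dual gap
`Φ(ω̄) - L(ω̄, z̃)`.
-/

open Finset
open scoped RealInnerProductSpace

section Averaging

variable {ι E : Type*} [SeminormedAddCommGroup E]

lemma norm_sum_sq_le_card_mul_sum_norm_sq (s : Finset ι) (f : ι → E) :
    ‖∑ i ∈ s, f i‖ ^ 2 ≤ #s * ∑ i ∈ s, ‖f i‖ ^ 2 :=
  (pow_le_pow_left₀ (norm_nonneg _) (norm_sum_le s f) 2).trans (sq_sum_le_card_mul_sum_sq ..)

lemma norm_add_add_sq_le_s18 (a b c : E) :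
    ‖a + b + c‖ ^ 2 ≤ 3 * (‖a‖ ^ 2 + ‖b‖ ^ 2 + ‖c‖ ^ 2) := by
  simpa [Fin.sum_univ_three, add_assoc] using
    norm_sum_sq_le_card_mul_sum_norm_sq univ ![a, b, c]

lemma norm_average_sub_sq_le [NormedSpace ℝ E] {s : Finset ι} (hs : s.Nonempty)
    (u : ι → E) (G : E) :
    ‖(#s : ℝ)⁻¹ • ∑ i ∈ s, u i - G‖ ^ 2 ≤ (#s : ℝ)⁻¹ * ∑ i ∈ s, ‖u i - G‖ ^ 2 := by
  have hcard : (#s : ℝ) ≠ 0 := by exact_mod_cast hs.card_pos.ne'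
  have hcenter : (#s : ℝ)⁻¹ • ∑ i ∈ s, u i - G = (#s : ℝ)⁻¹ • ∑ i ∈ s, (u i - G) := by
    rw [sum_sub_distrib, sum_const, ← Nat.cast_smul_eq_nsmul ℝ, smul_sub, smul_smul,
      inv_mul_cancel₀ hcard, one_smul]
  calc ‖(#s : ℝ)⁻¹ • ∑ i ∈ s, u i - G‖ ^ 2
      = (#s : ℝ)⁻¹ ^ 2 * ‖∑ i ∈ s, (u i - G)‖ ^ 2 := by
        rw [hcenter, norm_smul, mul_pow, Real.norm_eq_abs, sq_abs]
    _ ≤ (#s : ℝ)⁻¹ ^ 2 * (#s * ∑ i ∈ s, ‖u i - G‖ ^ 2) := by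
        gcongr; exact norm_sum_sq_le_card_mul_sum_norm_sq s _
    _ = (#s : ℝ)⁻¹ * ∑ i ∈ s, ‖u i - G‖ ^ 2 := by field_simp

end Averaging

section Descent

variable {E : Type*} [NormedAddCommGroup E] [InnerProductSpace ℝ E] [CompleteSpace E]
  {Φ : E → ℝ} {β : ℝ}

lemma hasDerivAt_comp_lineMap (hΦ : Differentiable ℝ Φ) (x d : E) (t : ℝ) :
    HasDerivAt (fun t : ℝ => Φ (x + t • d)) ⟪gradient Φ (x + t • d), d⟫ t := by
  have hline : HasDerivAt (fun t : ℝ => x + t • d) d t := by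
    simpa using ((hasDerivAt_id t).smul_const d).const_add x
  simpa [Function.comp_def] using
    (hasGradientAt_iff_hasFDerivAt.mp (hΦ (x + t • d)).hasGradientAt).comp_hasDerivAt t hline

lemma descent_lemma (hΦ : Differentiable ℝ Φ)
    (hLip : ∀ x y, ‖gradient Φ x - gradient Φ y‖ ≤ β * ‖x - y‖) (x d : E) :
    Φ (x + d) ≤ Φ x + ⟪gradient Φ x, d⟫ + β / 2 * ‖d‖ ^ 2 := by
  set ψ : ℝ → ℝ := fun t => Φ (x + t • d) - t * ⟪gradient Φ x, d⟫ - β * ‖d‖ ^ 2 / 2 * t ^ 2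
  have hψ : ∀ t, HasDerivAt ψ
      (⟪gradient Φ (x + t • d), d⟫ - ⟪gradient Φ x, d⟫ - β * ‖d‖ ^ 2 * t) t := by
    intro t
    have hquad := (hasDerivAt_pow 2 t).const_mul (β * ‖d‖ ^ 2 / 2)
    refine (((hasDerivAt_comp_lineMap hΦ x d t).sub
      ((hasDerivAt_id t).mul_const ⟪gradient Φ x, d⟫)).sub hquad).congr_deriv ?_
    simp only [one_mul]
    ring
  have hψ' : ∀ t ∈ interior (Set.Icc (0 : ℝ) 1), deriv ψ t ≤ 0 := by
    intro t ht
    rw [interior_Icc] at ht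
    rw [(hψ t).deriv, sub_nonpos, ← inner_sub_left]
    calc ⟪gradient Φ (x + t • d) - gradient Φ x, d⟫
        ≤ ‖gradient Φ (x + t • d) - gradient Φ x‖ * ‖d‖ := real_inner_le_norm _ _
      _ ≤ β * ‖x + t • d - x‖ * ‖d‖ := by gcongr; exact hLip _ _
      _ = β * ‖d‖ ^ 2 * t := by
        rw [add_sub_cancel_left, norm_smul, Real.norm_eq_abs, abs_of_pos ht.1]; ring
  have hanti : AntitoneOn ψ (Set.Icc 0 1) :=
    antitoneOn_of_deriv_nonpos (convex_Icc 0 1)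
      (fun t _ => (hψ t).continuousAt.continuousWithinAt)
      (fun t _ => (hψ t).differentiableAt.differentiableWithinAt) hψ'
  have h10 : ψ 1 ≤ ψ 0 := hanti (by simp) (by simp) zero_le_one
  simp only [ψ, one_smul, zero_smul, add_zero, one_mul, zero_mul, one_pow, ne_eq,
    OfNat.ofNat_ne_zero, not_false_eq_true, zero_pow, mul_zero, sub_zero] at h10
  linarith

lemma descent_lemma_sub_smul (hΦ : Differentiable ℝ Φ)
    (hLip : ∀ x y, ‖gradient Φ x - gradient Φ y‖ ≤ β * ‖x - y‖) {η : ℝ} (hη : 0 ≤ η)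
    (hηβ : η * β ≤ 1) (x v : E) :
    Φ (x - η • v) - Φ x ≤ η / 2 * ‖v - gradient Φ x‖ ^ 2 - η / 2 * ‖gradient Φ x‖ ^ 2 := by
  have hdesc := descent_lemma hΦ hLip x (-(η • v))
  rw [← sub_eq_add_neg, inner_neg_right, real_inner_smul_right, norm_neg, norm_smul,
    Real.norm_eq_abs, abs_of_nonneg hη] at hdesc
  have hquad : β / 2 * (η * ‖v‖) ^ 2 ≤ η / 2 * ‖v‖ ^ 2 := by
    have := mul_le_mul_of_nonneg_left hηβ (mul_nonneg hη (sq_nonneg ‖v‖))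
    nlinarith
  rw [norm_sub_sq_real, real_inner_comm]
  linarith

end Descent

section Coupling

variable {d₁ d₂ : ℕ} {L : EuclideanSpace ℝ (Fin d₁) → EuclideanSpace ℝ (Fin d₂) → ℝ} {C : ℝ}

lemma norm_gradFst_sub_gradFst_le
    (hLip : ∀ (ω : EuclideanSpace ℝ (Fin d₁)) (z : EuclideanSpace ℝ (Fin d₂))
        (ω' : EuclideanSpace ℝ (Fin d₁)) (z' : EuclideanSpace ℝ (Fin d₂)),
      Real.sqrt (‖gradFst L ω z - gradFst L ω' z'‖ ^ 2 + ‖gradSnd L ω z - gradSnd L ω' z'‖ ^ 2)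
        ≤ C * Real.sqrt (‖ω - ω'‖ ^ 2 + ‖z - z'‖ ^ 2))
    (ω : EuclideanSpace ℝ (Fin d₁)) (z z' : EuclideanSpace ℝ (Fin d₂)) :
    ‖gradFst L ω z - gradFst L ω z'‖ ≤ C * ‖z - z'‖ := by
  have h := hLip ω z ω z'
  rw [sub_self, norm_zero, zero_pow two_ne_zero, zero_add, Real.sqrt_sq (norm_nonneg _)] at h
  refine le_trans ?_ h
  exact Real.le_sqrt_of_sq_le (le_add_of_nonneg_right (sq_nonneg _))

lemma norm_gradient_sub_gradFst_sq_le
    (hLip : ∀ (ω : EuclideanSpace ℝ (Fin d₁)) (z : EuclideanSpace ℝ (Fin d₂))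
        (ω' : EuclideanSpace ℝ (Fin d₁)) (z' : EuclideanSpace ℝ (Fin d₂)),
      Real.sqrt (‖gradFst L ω z - gradFst L ω' z'‖ ^ 2 + ‖gradSnd L ω z - gradSnd L ω' z'‖ ^ 2)
        ≤ C * Real.sqrt (‖ω - ω'‖ ^ 2 + ‖z - z'‖ ^ 2))
    {Φ : EuclideanSpace ℝ (Fin d₁) → ℝ}
    {fstar : EuclideanSpace ℝ (Fin d₁) → EuclideanSpace ℝ (Fin d₂)}
    {μ : ℝ} (hgradΦ : ∀ ω, gradient Φ ω = gradFst L ω (fstar ω))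
    (hQG : ∀ ω z, ‖fstar ω - z‖ ^ 2 ≤ (2 / μ) * (Φ ω - L ω z))
    (ω : EuclideanSpace ℝ (Fin d₁)) (z : EuclideanSpace ℝ (Fin d₂)) :
    ‖gradient Φ ω - gradFst L ω z‖ ^ 2 ≤ C ^ 2 * ((2 / μ) * (Φ ω - L ω z)) := by
  calc ‖gradient Φ ω - gradFst L ω z‖ ^ 2 ≤ (C * ‖fstar ω - z‖) ^ 2 := by
        rw [hgradΦ]
        exact pow_le_pow_left₀ (norm_nonneg _) (norm_gradFst_sub_gradFst_le hLip ω _ z) 2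
    _ = C ^ 2 * ‖fstar ω - z‖ ^ 2 := mul_pow ..
    _ ≤ C ^ 2 * ((2 / μ) * (Φ ω - L ω z)) := by gcongr; exact hQG ω z

end Coupling

theorem stmt18_general {d₁ d₂ : ℕ} (C μ β η : ℝ) (A : ℕ) (hA : 0 < A)
    (L : EuclideanSpace ℝ (Fin d₁) → EuclideanSpace ℝ (Fin d₂) → ℝ)
    (Φ : EuclideanSpace ℝ (Fin d₁) → ℝ)
    (fstar : EuclideanSpace ℝ (Fin d₁) → EuclideanSpace ℝ (Fin d₂))
    (hLip : ∀ (ω : EuclideanSpace ℝ (Fin d₁)) (z : EuclideanSpace ℝ (Fin d₂))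
        (ω' : EuclideanSpace ℝ (Fin d₁)) (z' : EuclideanSpace ℝ (Fin d₂)),
      Real.sqrt (‖gradFst L ω z - gradFst L ω' z'‖ ^ 2 + ‖gradSnd L ω z - gradSnd L ω' z'‖ ^ 2)
        ≤ C * Real.sqrt (‖ω - ω'‖ ^ 2 + ‖z - z'‖ ^ 2))
    (hgradΦ : ∀ ω, gradient Φ ω = gradFst L ω (fstar ω))
    (hQG : ∀ ω z, ‖fstar ω - z‖ ^ 2 ≤ (2 / μ) * (Φ ω - L ω z))
    (hΦdiff : Differentiable ℝ Φ)
    (hΦLip : ∀ x y, ‖gradient Φ x - gradient Φ y‖ ≤ β * ‖x - y‖)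
    (hη0 : 0 < η) (hη : η ≤ 1 / β)
    (ztilde : EuclideanSpace ℝ (Fin d₂))
    (g m : Fin A → EuclideanSpace ℝ (Fin d₁))
    (ωbar ωbar' : EuclideanSpace ℝ (Fin d₁))
    (hupd : ωbar' = ωbar - (η / A) • ∑ i, (g i + m i)) :
    Φ ωbar' - Φ ωbar
      ≤ (3 * η * C ^ 2 / μ) * (Φ ωbar - L ωbar ztilde)
        + (3 * η / (2 * A)) * ∑ i, ‖gradFst L ωbar ztilde - g i‖ ^ 2
        + (3 * η / (2 * A)) * ∑ i, ‖m i‖ ^ 2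
        - (η / 2) * ‖gradient Φ ωbar‖ ^ 2 := by
  set G := gradient Φ ωbar
  set v := (A : ℝ)⁻¹ • ∑ i, (g i + m i)
  set K := C ^ 2 * ((2 / μ) * (Φ ωbar - L ωbar ztilde))
  have hβ : 0 < β := one_div_pos.mp (hη0.trans_le hη)
  have hstep : Φ ωbar' - Φ ωbar ≤ η / 2 * ‖v - G‖ ^ 2 - η / 2 * ‖G‖ ^ 2 := by
    rw [hupd, div_eq_mul_inv, mul_smul]
    exact descent_lemma_sub_smul hΦdiff hΦLip hη0.le ((le_div_iff₀ hβ).mp hη) ωbar v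
  have havg : ‖v - G‖ ^ 2 ≤ (A : ℝ)⁻¹ * ∑ i, ‖g i + m i - G‖ ^ 2 := by
    simpa using norm_average_sub_sq_le (univ_nonempty_iff.mpr ⟨⟨0, hA⟩⟩) (fun i => g i + m i) G
  have hterm (i : Fin A) :
      ‖g i + m i - G‖ ^ 2 ≤ 3 * (K + ‖gradFst L ωbar ztilde - g i‖ ^ 2 + ‖m i‖ ^ 2) := by
    set gL := gradFst L ωbar ztilde
    have hsplit : g i + m i - G = -((G - gL) + (gL - g i) + -m i) := by abel
    have h3 := norm_add_add_sq_le_s18 (G - gL) (gL - g i) (-m i)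
    rw [norm_neg] at h3
    rw [hsplit, norm_neg]
    linarith [norm_gradient_sub_gradFst_sq_le hLip hgradΦ hQG ωbar ztilde]
  have hsum := sum_le_sum fun i (_ : i ∈ univ) => hterm i
  simp only [mul_add, sum_add_distrib, ← mul_sum, sum_const, card_univ, Fintype.card_fin,
    nsmul_eq_mul] at hsum
  calc Φ ωbar' - Φ ωbar ≤ η / 2 * ((A : ℝ)⁻¹ * ∑ i, ‖g i + m i - G‖ ^ 2) - η / 2 * ‖G‖ ^ 2 := by
        have := mul_le_mul_of_nonneg_left havg (half_pos hη0).le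
        linarith
    _ ≤ η / 2 * ((A : ℝ)⁻¹ * (3 * (A * K) + 3 * ∑ i, ‖gradFst L ωbar ztilde - g i‖ ^ 2
          + 3 * ∑ i, ‖m i‖ ^ 2)) - η / 2 * ‖G‖ ^ 2 := by gcongr
    _ = _ := by field_simp; ring

/-- multi-agent averaged descent step: under the envelope /
quadratic-growth hypotheses and `β`-smoothness of `Φ`, with `0 < η ≤ 1/β` and the averaged
update `ω̄' = ω̄ − (η/A)∑ᵢ(gᵢ + mᵢ)`,
`Φ(ω̄') − Φ(ω̄) ≤ (3ηC²/μ)(Φ(ω̄) − L(ω̄, z̃)) + (3η/(2A))∑ᵢ‖∇_ω L(ω̄, z̃) − gᵢ‖²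
  + (3η/(2A))∑ᵢ‖mᵢ‖² − (η/2)‖∇Φ(ω̄)‖²`. -/
theorem stmt18 {d₁ d₂ : ℕ} (C μ β η : ℝ) (hμ : 0 < μ) (A : ℕ) (hA : 0 < A)
    (L : EuclideanSpace ℝ (Fin d₁) → EuclideanSpace ℝ (Fin d₂) → ℝ)
    (Φ : EuclideanSpace ℝ (Fin d₁) → ℝ)
    (fstar : EuclideanSpace ℝ (Fin d₁) → EuclideanSpace ℝ (Fin d₂))
    (hdiff : Differentiable ℝ
      (fun p : EuclideanSpace ℝ (Fin d₁) × EuclideanSpace ℝ (Fin d₂) => L p.1 p.2))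
    (hLip : ∀ (ω : EuclideanSpace ℝ (Fin d₁)) (z : EuclideanSpace ℝ (Fin d₂))
        (ω' : EuclideanSpace ℝ (Fin d₁)) (z' : EuclideanSpace ℝ (Fin d₂)),
      Real.sqrt (‖gradFst L ω z - gradFst L ω' z'‖ ^ 2 + ‖gradSnd L ω z - gradSnd L ω' z'‖ ^ 2)
        ≤ C * Real.sqrt (‖ω - ω'‖ ^ 2 + ‖z - z'‖ ^ 2))
    (hattain : ∀ ω z, L ω z ≤ L ω (fstar ω))
    (hΦ : ∀ ω, Φ ω = L ω (fstar ω))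
    (hgradΦ : ∀ ω, gradient Φ ω = gradFst L ω (fstar ω))
    (hQG : ∀ ω z, ‖fstar ω - z‖ ^ 2 ≤ (2 / μ) * (Φ ω - L ω z))
    (hΦdiff : Differentiable ℝ Φ)
    (hΦLip : ∀ x y, ‖gradient Φ x - gradient Φ y‖ ≤ β * ‖x - y‖)
    (hη0 : 0 < η) (hη : η ≤ 1 / β)
    (ztilde : EuclideanSpace ℝ (Fin d₂))
    (g m : Fin A → EuclideanSpace ℝ (Fin d₁))
    (ωbar ωbar' : EuclideanSpace ℝ (Fin d₁))
    (hupd : ωbar' = ωbar - (η / A) • ∑ i, (g i + m i)) :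
    Φ ωbar' - Φ ωbar
      ≤ (3 * η * C ^ 2 / μ) * (Φ ωbar - L ωbar ztilde)
        + (3 * η / (2 * A)) * ∑ i, ‖gradFst L ωbar ztilde - g i‖ ^ 2
        + (3 * η / (2 * A)) * ∑ i, ‖m i‖ ^ 2
        - (η / 2) * ‖gradient Φ ωbar‖ ^ 2 :=
  stmt18_general C μ β η A hA L Φ fstar hLip hgradΦ hQG hΦdiff hΦLip hη0 hη ztilde g m ωbar ωbar'
    hupd
end
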